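/- arXiv:math/0601046 — 3 statements merged into one kernel-verified Lean document; each statement's English description precedes it below -/
import Mathlib

section
/- Let A be an abelian group, m ≥ 2 an integer, and ĥ : A → ℝ≥0 a function satisfying ĥ(mQ) = m² ĥ(Q) and the parallelogram law. Suppose: (i) there exists ε > 0 such that {P ∈ A : ĥ(P) ≤ ε} is finite; and (ii) A/mA is finite. Then for every M > 0, the set {P ∈ A : ĥ(P) ≤ M} is finite. -/
/-!
Pass from `m` to `n = m²`, so that `n² ≥ 16` and `A/nA` is still finite. If two points of
height at most `2M` lie in the same class mod `nA`, their difference is `n • R` with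
`n² h(R) ≤ 2 · 2M + 2 · 2M`, hence `h(R) ≤ M`. So each class meets `{h ≤ 2M}` in a translate of
a subset of `n • {h ≤ M}`, and finiteness of `{h ≤ M}` propagates to `{h ≤ 2M}`. Starting
from `{h ≤ ε}`, the bounds `2ᵏε` exhaust all `M`.
-/

section Cosets

variable {A : Type*} [AddCommGroup A]

lemma Set.Finite.of_forall_sub_mem {T F : Set A} (hF : F.Finite)
    (hT : ∀ P ∈ T, ∀ P₀ ∈ T, P - P₀ ∈ F) : T.Finite := by
  rcases T.eq_empty_or_nonempty with rfl | ⟨P₀, hP₀⟩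
  · exact Set.finite_empty
  · exact (hF.image (· + P₀)).subset fun P hP => ⟨P - P₀, hT P hP P₀ hP₀, sub_add_cancel P P₀⟩

lemma Set.Finite.of_forall_sub_eq_nsmul {n : ℕ} {S : Finset A}
    (hS : ∀ P, ∃ Q ∈ S, ∃ R, P = Q + n • R) {T F : Set A} (hF : F.Finite)
    (hT : ∀ P ∈ T, ∀ P₀ ∈ T, ∀ R, P - P₀ = n • R → R ∈ F) : T.Finite := by
  have hcover : T ⊆ ⋃ Q ∈ S, {P ∈ T | ∃ R, P = Q + n • R} := fun P hP => by
    obtain ⟨Q, hQ, hR⟩ := hS P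
    exact Set.mem_biUnion hQ ⟨hP, hR⟩
  refine (S.finite_toSet.biUnion fun Q _ => ?_).subset hcover
  refine (hF.image (n • ·)).of_forall_sub_mem ?_
  rintro P ⟨hP, R, rfl⟩ P₀ ⟨hP₀, R₀, rfl⟩
  have hsub : Q + n • R - (Q + n • R₀) = n • (R - R₀) := by rw [smul_sub]; abel
  exact ⟨R - R₀, hT _ hP _ hP₀ _ hsub, hsub.symm⟩

lemma exists_mem_image₂_eq_add_mul_nsmul [DecidableEq A] {m : ℕ} {S : Finset A}
    (hS : ∀ P, ∃ Q ∈ S, ∃ R, P = Q + m • R) (P : A) :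
    ∃ Q ∈ Finset.image₂ (fun Q Q' => Q + m • Q') S S, ∃ R, P = Q + (m * m) • R := by
  obtain ⟨Q, hQ, R, rfl⟩ := hS P
  obtain ⟨Q', hQ', R', rfl⟩ := hS R
  exact ⟨_, Finset.mem_image₂_of_mem hQ hQ', R', by rw [smul_add, mul_smul]; abel⟩

end Cosets

section Height

variable {A : Type*} [AddCommGroup A] {h : A → ℝ}

lemma height_mul_nsmul {m : ℕ} (hquad : ∀ Q : A, h (m • Q) = (m : ℝ) ^ 2 * h Q) (Q : A) :
    h ((m * m) • Q) = ((m * m : ℕ) : ℝ) ^ 2 * h Q := by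
  rw [mul_smul, hquad, hquad]
  push_cast
  ring

variable (hpos : ∀ P : A, 0 ≤ h P)
  (hpar : ∀ P Q : A, h (P + Q) + h (P - Q) = 2 * h P + 2 * h Q)
include hpos hpar

lemma height_sub_le (P Q : A) : h (P - Q) ≤ 2 * h P + 2 * h Q := by
  linarith [hpar P Q, hpos (P + Q)]

variable {n : ℕ} (hn : 8 ≤ (n : ℝ) ^ 2) (hquad : ∀ Q : A, h (n • Q) = (n : ℝ) ^ 2 * h Q)
  {S : Finset A} (hS : ∀ P, ∃ Q ∈ S, ∃ R, P = Q + n • R)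
include hn hquad hS

lemma finite_height_le_two_mul {M : ℝ} (hM : {P | h P ≤ M}.Finite) :
    {P | h P ≤ 2 * M}.Finite := by
  refine hM.of_forall_sub_eq_nsmul hS fun P hP P₀ hP₀ R hR => ?_
  have hRle : (n : ℝ) ^ 2 * h R ≤ 8 * M := by
    rw [← hquad, ← hR]
    linarith [height_sub_le hpos hpar P P₀, hP.out, hP₀.out]
  have hM₀ : 0 ≤ M := by linarith [hpos P, hP.out]
  show h R ≤ M
  nlinarith [hpos R]

lemma finite_height_le_two_pow_mul {ε : ℝ} (hε : {P | h P ≤ ε}.Finite) (k : ℕ) :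
    {P | h P ≤ 2 ^ k * ε}.Finite := by
  induction k with
  | zero => simpa using hε
  | succ k ih =>
    rw [pow_succ, mul_comm _ (2 : ℝ), mul_assoc]
    exact finite_height_le_two_mul hpos hpar hn hquad hS ih

end Height

/-- Let `A` be an abelian group, `m ≥ 2`, and `ĥ : A → ℝ≥0` a function with
`ĥ(mQ) = m²ĥ(Q)` and the parallelogram law.  If for some `ε > 0` the set of
points of height at most `ε` is finite, and `A/mA` is finite, then for every
`M > 0` the set of points of height at most `M` is finite. -/
theorem stmt_11 {A : Type*} [AddCommGroup A] (m : ℕ) (hm : 2 ≤ m)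
    (h : A → ℝ) (hpos : ∀ P : A, 0 ≤ h P)
    (hquad : ∀ Q : A, h (m • Q) = (m : ℝ) ^ 2 * h Q)
    (hpar : ∀ P Q : A, h (P + Q) + h (P - Q) = 2 * h P + 2 * h Q)
    (hsmall : ∃ ε : ℝ, 0 < ε ∧ {P : A | h P ≤ ε}.Finite)
    (hquot : ∃ S : Finset A, ∀ P : A, ∃ Q ∈ S, ∃ R : A, P = Q + m • R) :
    ∀ M : ℝ, 0 < M → {P : A | h P ≤ M}.Finite := by
  classical
  obtain ⟨ε, hε, hεfin⟩ := hsmall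
  obtain ⟨S, hS⟩ := hquot
  have hsq : 8 ≤ ((m * m : ℕ) : ℝ) ^ 2 := by
    have h2 : (2 : ℝ) ≤ m := by exact_mod_cast hm
    have h4 : (4 : ℝ) ≤ m * m := by nlinarith
    push_cast
    nlinarith
  intro M _
  obtain ⟨k, hk⟩ := pow_unbounded_of_one_lt (M / ε) one_lt_two
  refine (finite_height_le_two_pow_mul hpos hpar hsq (height_mul_nsmul hquad)
    (exists_mem_image₂_eq_add_mul_nsmul hS) hεfin k).subset fun P hP => ?_
  rw [div_lt_iff₀ hε] at hk
  exact hP.out.trans hk.le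
end

section
/- Let A be an abelian group and ĥ : A → ℝ≥0 a quadratic function (satisfying the parallelogram law and ĥ(mP) = m²ĥ(P)) such that A/mA is finite for some m ≥ 2 not dividing the characteristic and {P ∈ A : ĥ(P) ≤ M} is finite for every M > 0. Then the subgroup of A generated by any coset representatives of A/mA together with points of bounded height generates A; in particular, if additionally ĥ(P)=0 only for points in a finite set, A is finitely generated (descent argument). -/
/-- Abstract descent step of the Mordell–Weil theorem: if `A` is an abelian group,
`m ≥ 2`, `A/mA` is finite, and `ĥ : A → ℝ≥0` is a quadratic height function
(parallelogram law and `ĥ(mP) = m²ĥ(P)`) with the Northcott property that all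
sets of bounded height are finite, then `A` is finitely generated. -/
theorem stmt_12 {A : Type*} [AddCommGroup A] (m : ℕ) (hm : 2 ≤ m)
    (h : A → ℝ) (hpos : ∀ P : A, 0 ≤ h P)
    (hquad : ∀ Q : A, h (m • Q) = (m : ℝ) ^ 2 * h Q)
    (hpar : ∀ P Q : A, h (P + Q) + h (P - Q) = 2 * h P + 2 * h Q)
    (hquot : ∃ S : Finset A, ∀ P : A, ∃ Q ∈ S, ∃ R : A, P = Q + m • R)
    (hnorthcott : ∀ M : ℝ, 0 < M → {P : A | h P ≤ M}.Finite) :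
    AddGroup.FG A := by
  classical
  obtain ⟨S, hS⟩ := hquot
  have hSne : S.Nonempty := by
    obtain ⟨Q, hQ, _⟩ := hS 0
    exact ⟨Q, hQ⟩
  set C : ℝ := S.sup' hSne h with hCdef
  have hC : ∀ Q ∈ S, h Q ≤ C := fun Q hQ => Finset.le_sup' h hQ
  have hC0 : 0 ≤ C := le_trans (hpos hSne.choose) (hC _ hSne.choose_spec)
  have hfin := hnorthcott (C + 1) (by linarith)
  set T : Finset A := hfin.toFinset with hTdef
  have hT : ∀ P : A, h P ≤ C + 1 → P ∈ T := by
    intro P hP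
    simp only [hTdef, Set.Finite.mem_toFinset, Set.mem_setOf_eq]
    exact hP
  set G := AddSubgroup.closure ((S ∪ T : Finset A) : Set A) with hGdef
  -- descent bound: h R ≤ (h P + C) / 2
  have hdesc : ∀ P Q R : A, Q ∈ S → P = Q + m • R → h R ≤ (h P + C) / 2 := by
    intro P Q R hQ hPQR
    have h1 : h (m • R) = (m : ℝ) ^ 2 * h R := hquad R
    have h2 : h (P - Q) = h (m • R) := by rw [hPQR]; congr 1; abel
    have h3 : h (P - Q) ≤ 2 * h P + 2 * h Q := by
      have := hpar P Q
      have := hpos (P + Q)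
      linarith
    have hm4 : (4 : ℝ) ≤ (m : ℝ) ^ 2 := by
      have : (2 : ℝ) ≤ (m : ℝ) := by exact_mod_cast hm
      nlinarith
    have hR0 := hpos R
    have hQC := hC Q hQ
    nlinarith
  have key : ∀ n : ℕ, ∀ P : A, h P ≤ C + 1 + n → P ∈ G := by
    intro n
    induction n with
    | zero =>
      intro P hP
      apply AddSubgroup.subset_closure
      simp only [Finset.coe_union, Set.mem_union, Finset.mem_coe]
      exact Or.inr (hT P (by simpa using hP))
    | succ n ih =>
      intro P hP
      by_cases hle : h P ≤ C + 1 + n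
      · exact ih P hle
      · obtain ⟨Q, hQ, R, hPQR⟩ := hS P
        have hRle : h R ≤ C + 1 + n := by
          have := hdesc P Q R hQ hPQR
          push_neg at hle
          have : h R ≤ (h P + C) / 2 := this
          have hPn : h P ≤ C + 1 + (n + 1 : ℕ) := hP
          push_cast at hPn ⊢
          nlinarith [Nat.cast_nonneg (α := ℝ) n]
        have hRG : R ∈ G := ih R hRle
        have hQG : Q ∈ G := AddSubgroup.subset_closure (by
          simp only [Finset.coe_union, Set.mem_union, Finset.mem_coe]
          exact Or.inl hQ)
        rw [hPQR]
        exact AddSubgroup.add_mem _ hQG (AddSubgroup.nsmul_mem _ hRG m)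
  have hGtop : G = ⊤ := by
    ext P
    simp only [AddSubgroup.mem_top, iff_true]
    exact key ⌈h P⌉₊ P (le_trans (Nat.le_ceil _) (by
      have : (0:ℝ) ≤ C + 1 := by linarith
      linarith [Nat.le_ceil (h P)]))
  exact ⟨⟨S ∪ T, by rw [← hGtop]⟩⟩
end

section
/- Let E ⊆ L² be a bounded set over a valued field L, and define d⁰_n(E) = sup over n-tuples z_1,…,z_n ∈ E of (∏_{i≠j} |z_i ∧ z_j|)^{1/(n(n−1))}. Then the sequence (d⁰_n(E))_{n≥2} is non-increasing in n; in particular the limit d⁰_∞(E) = lim_{n→∞} d⁰_n(E) exists. -/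
open Finset

lemma card_ne_pair {n : ℕ} {a b : Fin (n+1)} (hab : a ≠ b) :
    (Finset.univ.filter (fun k => k ≠ a ∧ k ≠ b)).card = n - 1 := by
  have h : (Finset.univ.filter (fun k : Fin (n+1) => k ≠ a ∧ k ≠ b))
      = Finset.univ \ ({a, b} : Finset (Fin (n+1))) := by
    ext k; simp [not_or, and_comm]
  rw [h, Finset.card_sdiff_of_subset (by simp)]
  simp [Finset.card_pair hab]

lemma prod_succAbove_offDiag {n : ℕ} (f : Fin (n+1) × Fin (n+1) → ℝ) :
    ∏ k : Fin (n+1), ∏ q ∈ (univ : Finset (Fin n)).offDiag,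
        f (k.succAbove q.1, k.succAbove q.2)
      = (∏ p ∈ (univ : Finset (Fin (n+1))).offDiag, f p) ^ (n - 1) := by
  have h1 : ∀ k : Fin (n+1),
      (∏ q ∈ (univ : Finset (Fin n)).offDiag,
        f (k.succAbove q.1, k.succAbove q.2))
        = ∏ p ∈ (univ : Finset (Fin (n+1))).offDiag.filter
            (fun p => p.1 ≠ k ∧ p.2 ≠ k), f p := by
    intro k
    refine Finset.prod_bij (fun q _ => (k.succAbove q.1, k.succAbove q.2)) ?_ ?_ ?_ ?_
    · intro q hq
      simp only [mem_offDiag, mem_univ, true_and] at hq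
      simp only [mem_filter, mem_offDiag, mem_univ, true_and]
      exact ⟨fun h => hq (Fin.succAbove_right_injective h),
        Fin.succAbove_ne k q.1, Fin.succAbove_ne k q.2⟩
    · intro q1 h1 q2 h2 heq
      have h1' := congrArg Prod.fst heq
      have h2' := congrArg Prod.snd heq
      exact Prod.ext (Fin.succAbove_right_injective h1')
        (Fin.succAbove_right_injective h2')
    · intro p hp
      simp only [mem_filter, mem_offDiag, mem_univ, true_and] at hp
      obtain ⟨hne, h1, h2⟩ := hp
      obtain ⟨a, ha⟩ := Fin.exists_succAbove_eq h1
      obtain ⟨b, hb⟩ := Fin.exists_succAbove_eq h2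
      refine ⟨(a, b), ?_, by simp [ha, hb]⟩
      simp only [mem_offDiag, mem_univ, true_and]
      rintro rfl
      exact hne (ha ▸ hb ▸ rfl)
    · intro q hq; rfl
  calc ∏ k : Fin (n+1), ∏ q ∈ (univ : Finset (Fin n)).offDiag,
        f (k.succAbove q.1, k.succAbove q.2)
      = ∏ k : Fin (n+1), ∏ p ∈ (univ : Finset (Fin (n+1))).offDiag.filter
            (fun p => p.1 ≠ k ∧ p.2 ≠ k), f p := by
        exact Finset.prod_congr rfl fun k _ => h1 k
    _ = ∏ p ∈ (univ : Finset (Fin (n+1))).offDiag,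
          ∏ k ∈ univ.filter (fun k => k ≠ p.1 ∧ k ≠ p.2), f p := by
        refine Finset.prod_comm' ?_
        intro k p
        simp only [mem_filter, mem_univ, true_and, and_comm]
        tauto
    _ = ∏ p ∈ (univ : Finset (Fin (n+1))).offDiag, f p ^ (n - 1) := by
        refine Finset.prod_congr rfl fun p hp => ?_
        rw [Finset.prod_const, card_ne_pair (Finset.mem_offDiag.mp hp).2.2]
    _ = _ := by rw [Finset.prod_pow]


/-- The `n`-th homogeneous diameter
`d⁰ₙ(E) = sup_{z₁,…,zₙ ∈ E} (∏_{i≠j} |zᵢ ∧ zⱼ|)^{1/(n(n-1))}`. -/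
noncomputable def homDiam {L : Type*} [Field L] (v : AbsoluteValue L ℝ)
    (E : Set (Fin 2 → L)) (n : ℕ) : ℝ :=
  sSup {r : ℝ | ∃ z : Fin n → (Fin 2 → L), (∀ i, z i ∈ E) ∧
    r = (∏ p ∈ Finset.univ.offDiag,
          v (z p.1 0 * z p.2 1 - z p.1 1 * z p.2 0)) ^ ((1 : ℝ) / (n * (n - 1)))}

/-- For a bounded set `E ⊆ L²` over a valued field, the sequence `d⁰ₙ(E)` is
non-increasing for `n ≥ 2`; in particular the limit
`d⁰_∞(E) = limₙ d⁰ₙ(E)` exists. -/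
theorem stmt_18 {L : Type*} [Field L] (v : AbsoluteValue L ℝ)
    (E : Set (Fin 2 → L))
    (hbdd : ∃ B : ℝ, ∀ z ∈ E, max (v (z 0)) (v (z 1)) ≤ B) :
    (∀ n : ℕ, 2 ≤ n → homDiam v E (n + 1) ≤ homDiam v E n) ∧
      ∃ l : ℝ, Filter.Tendsto (fun n : ℕ => homDiam v E (n + 2))
        Filter.atTop (nhds l) := by
  obtain ⟨B, hB⟩ := hbdd
  -- every homDiam is nonnegative
  have hnonneg : ∀ m : ℕ, 0 ≤ homDiam v E m := by
    intro m
    refine Real.sSup_nonneg ?_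
    rintro x ⟨z, hz, rfl⟩
    exact Real.rpow_nonneg (Finset.prod_nonneg fun p _ => v.nonneg _) _
  have key : ∀ n : ℕ, 2 ≤ n → homDiam v E (n + 1) ≤ homDiam v E n := by
    intro n hn
    by_cases hE : E.Nonempty
    · -- E nonempty; B ≥ 0
      obtain ⟨z₀, hz₀⟩ := hE
      have hB0 : 0 ≤ B :=
        le_trans (v.nonneg (z₀ 0)) (le_trans (le_max_left _ _) (hB z₀ hz₀))
      -- bound on each factor
      have hfac : ∀ z w : Fin 2 → L, z ∈ E → w ∈ E →
          v (z 0 * w 1 - z 1 * w 0) ≤ 2 * B * B + 1 := by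
        intro z w hzE hwE
        have h1 : v (z 0) ≤ B := le_trans (le_max_left _ _) (hB z hzE)
        have h2 : v (z 1) ≤ B := le_trans (le_max_right _ _) (hB z hzE)
        have h3 : v (w 0) ≤ B := le_trans (le_max_left _ _) (hB w hwE)
        have h4 : v (w 1) ≤ B := le_trans (le_max_right _ _) (hB w hwE)
        have ht : v (z 0 * w 1 - z 1 * w 0) ≤ v (z 0 * w 1) + v (z 1 * w 0) := by
          have := v.add_le (z 0 * w 1) (-(z 1 * w 0))
          rwa [v.map_neg, ← sub_eq_add_neg] at this
        have hm1 : v (z 0 * w 1) ≤ B * B := by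
          rw [v.map_mul]; exact mul_le_mul h1 h4 (v.nonneg _) hB0
        have hm2 : v (z 1 * w 0) ≤ B * B := by
          rw [v.map_mul]; exact mul_le_mul h2 h3 (v.nonneg _) hB0
        nlinarith
      set C : ℝ := 2 * B * B + 1 with hCdef
      have hC0 : 0 ≤ C := by nlinarith
      -- upper bound C for every element of the defining set, any m ≥ 2
      have hub : ∀ m : ℕ, 2 ≤ m → ∀ r ∈ {r : ℝ | ∃ z : Fin m → (Fin 2 → L),
          (∀ i, z i ∈ E) ∧ r = (∏ p ∈ Finset.univ.offDiag,
            v (z p.1 0 * z p.2 1 - z p.1 1 * z p.2 0)) ^ ((1 : ℝ) / (m * (m - 1)))},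
          r ≤ C := by
        intro m hm r hr
        obtain ⟨z, hz, rfl⟩ := hr
        have hD : (0:ℝ) < (m:ℝ) * ((m:ℝ) - 1) := by
          have : (2:ℝ) ≤ (m:ℝ) := by exact_mod_cast hm
          nlinarith
        have hcard : ((Finset.univ : Finset (Fin m)).offDiag.card) = m * m - m := by
          rw [Finset.offDiag_card]; simp
        have hP : (∏ p ∈ (Finset.univ : Finset (Fin m)).offDiag,
            v (z p.1 0 * z p.2 1 - z p.1 1 * z p.2 0)) ≤ C ^ (m * m - m) := by
          calc (∏ p ∈ (Finset.univ : Finset (Fin m)).offDiag,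
              v (z p.1 0 * z p.2 1 - z p.1 1 * z p.2 0))
              ≤ ∏ _p ∈ (Finset.univ : Finset (Fin m)).offDiag, C :=
                Finset.prod_le_prod (fun p _ => v.nonneg _)
                  (fun p _ => hfac _ _ (hz _) (hz _))
            _ = C ^ (m * m - m) := by rw [Finset.prod_const, hcard]
        have hkD : ((m * m - m : ℕ) : ℝ) = (m:ℝ) * ((m:ℝ) - 1) := by
          have hle : m ≤ m * m := Nat.le_mul_of_pos_left m (by omega)
          rw [Nat.cast_sub hle]; push_cast; ring
        calc (∏ p ∈ (Finset.univ : Finset (Fin m)).offDiag,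
            v (z p.1 0 * z p.2 1 - z p.1 1 * z p.2 0)) ^ ((1:ℝ) / (m * ((m:ℝ) - 1)))
            ≤ (C ^ (m * m - m)) ^ ((1:ℝ) / (m * ((m:ℝ) - 1))) :=
              Real.rpow_le_rpow (Finset.prod_nonneg fun p _ => v.nonneg _) hP
                (by positivity)
          _ = C := by
              rw [← Real.rpow_natCast C (m * m - m), ← Real.rpow_mul hC0, hkD,
                mul_one_div, div_self hD.ne', Real.rpow_one]
      -- the main estimate
      have hd0 : 0 ≤ homDiam v E n := hnonneg n
      rw [homDiam]
      refine Real.sSup_le ?_ hd0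
      rintro r ⟨z, hz, rfl⟩
      have hD : (0:ℝ) < (n:ℝ) * ((n:ℝ) - 1) := by
        have : (2:ℝ) ≤ (n:ℝ) := by exact_mod_cast hn
        nlinarith
      have hD' : (0:ℝ) < ((n:ℝ) + 1) * (n:ℝ) := by
        have : (2:ℝ) ≤ (n:ℝ) := by exact_mod_cast hn
        nlinarith
      have hP0 : 0 ≤ ∏ p ∈ (Finset.univ : Finset (Fin (n+1))).offDiag,
          v (z p.1 0 * z p.2 1 - z p.1 1 * z p.2 0) :=
        Finset.prod_nonneg fun p _ => v.nonneg _
      -- each deleted subproduct gives an element of the n-th set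
      have hQmem : ∀ k : Fin (n+1),
          (∏ q ∈ (Finset.univ : Finset (Fin n)).offDiag,
            v (z (k.succAbove q.1) 0 * z (k.succAbove q.2) 1 -
              z (k.succAbove q.1) 1 * z (k.succAbove q.2) 0)) ^ ((1:ℝ) / (n * ((n:ℝ) - 1)))
            ≤ homDiam v E n := by
        intro k
        refine le_csSup ⟨C, fun r hr => hub n hn r hr⟩ ?_
        exact ⟨z ∘ k.succAbove, fun i => hz _, rfl⟩
      have hQle : ∀ k : Fin (n+1),
          (∏ q ∈ (Finset.univ : Finset (Fin n)).offDiag,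
            v (z (k.succAbove q.1) 0 * z (k.succAbove q.2) 1 -
              z (k.succAbove q.1) 1 * z (k.succAbove q.2) 0))
            ≤ (homDiam v E n) ^ ((n:ℝ) * ((n:ℝ) - 1)) := by
        intro k
        have hQ0 : 0 ≤ ∏ q ∈ (Finset.univ : Finset (Fin n)).offDiag,
            v (z (k.succAbove q.1) 0 * z (k.succAbove q.2) 1 -
              z (k.succAbove q.1) 1 * z (k.succAbove q.2) 0) :=
          Finset.prod_nonneg fun q _ => v.nonneg _
        have := Real.rpow_le_rpow (Real.rpow_nonneg hQ0 _) (hQmem k) hD.le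
        rwa [← Real.rpow_mul hQ0, one_div_mul_cancel hD.ne', Real.rpow_one] at this
      -- product over k
      have hprodQ : (∏ k : Fin (n+1), ∏ q ∈ (Finset.univ : Finset (Fin n)).offDiag,
            v (z (k.succAbove q.1) 0 * z (k.succAbove q.2) 1 -
              z (k.succAbove q.1) 1 * z (k.succAbove q.2) 0))
          ≤ ((homDiam v E n) ^ ((n:ℝ) * ((n:ℝ) - 1))) ^ (n + 1) := by
        calc (∏ k : Fin (n+1), ∏ q ∈ (Finset.univ : Finset (Fin n)).offDiag,
            v (z (k.succAbove q.1) 0 * z (k.succAbove q.2) 1 -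
              z (k.succAbove q.1) 1 * z (k.succAbove q.2) 0))
            ≤ ∏ _k : Fin (n+1), (homDiam v E n) ^ ((n:ℝ) * ((n:ℝ) - 1)) :=
              Finset.prod_le_prod
                (fun k _ => Finset.prod_nonneg fun q _ => v.nonneg _)
                (fun k _ => hQle k)
          _ = ((homDiam v E n) ^ ((n:ℝ) * ((n:ℝ) - 1))) ^ (n + 1) := by
              rw [Finset.prod_const, Finset.card_univ, Fintype.card_fin]
      -- combine with the combinatorial identity
      have hcomb := prod_succAbove_offDiag
        (fun p : Fin (n+1) × Fin (n+1) =>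
          v (z p.1 0 * z p.2 1 - z p.1 1 * z p.2 0))
      rw [hcomb] at hprodQ
      have e1 : ((homDiam v E n) ^ ((n:ℝ) * ((n:ℝ) - 1))) ^ (n + 1)
          = ((homDiam v E n) ^ (((n:ℝ) + 1) * (n:ℝ))) ^ (n - 1) := by
        rw [← Real.rpow_natCast ((homDiam v E n) ^ ((n:ℝ) * ((n:ℝ) - 1))) (n+1),
          ← Real.rpow_mul hd0,
          ← Real.rpow_natCast ((homDiam v E n) ^ (((n:ℝ) + 1) * (n:ℝ))) (n-1),
          ← Real.rpow_mul hd0]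
        congr 1
        have hc : ((n - 1 : ℕ) : ℝ) = (n:ℝ) - 1 := by
          rw [Nat.cast_sub (by omega)]; norm_num
        rw [hc]; push_cast; ring
      rw [e1] at hprodQ
      have hP3 : (∏ p ∈ (Finset.univ : Finset (Fin (n+1))).offDiag,
          v (z p.1 0 * z p.2 1 - z p.1 1 * z p.2 0))
          ≤ (homDiam v E n) ^ (((n:ℝ) + 1) * (n:ℝ)) :=
        (pow_le_pow_iff_left₀ hP0 (Real.rpow_nonneg hd0 _)
          (by omega : n - 1 ≠ 0)).mp hprodQ
      have hDs : ((n + 1 : ℕ) : ℝ) * (((n + 1 : ℕ) : ℝ) - 1) = ((n:ℝ) + 1) * (n:ℝ) := by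
        push_cast; ring
      calc (∏ p ∈ (Finset.univ : Finset (Fin (n+1))).offDiag,
          v (z p.1 0 * z p.2 1 - z p.1 1 * z p.2 0)) ^
            ((1:ℝ) / ((n + 1 : ℕ) * (((n + 1 : ℕ) : ℝ) - 1)))
          = (∏ p ∈ (Finset.univ : Finset (Fin (n+1))).offDiag,
            v (z p.1 0 * z p.2 1 - z p.1 1 * z p.2 0)) ^
              ((1:ℝ) / (((n:ℝ) + 1) * (n:ℝ))) := by rw [hDs]
        _ ≤ ((homDiam v E n) ^ (((n:ℝ) + 1) * (n:ℝ))) ^ ((1:ℝ) / (((n:ℝ) + 1) * (n:ℝ))) :=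
            Real.rpow_le_rpow hP0 hP3 (by positivity)
        _ = homDiam v E n := by
            rw [← Real.rpow_mul hd0, mul_one_div, div_self hD'.ne', Real.rpow_one]
    · -- E empty : both sides are sSup ∅ = 0
      have hEe : E = ∅ := Set.not_nonempty_iff_eq_empty.mp hE
      have hempty : ∀ m : ℕ, 1 ≤ m →
          {r : ℝ | ∃ z : Fin m → (Fin 2 → L), (∀ i, z i ∈ E) ∧
            r = (∏ p ∈ Finset.univ.offDiag,
              v (z p.1 0 * z p.2 1 - z p.1 1 * z p.2 0)) ^ ((1 : ℝ) / (m * (m - 1)))} = ∅ := by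
        intro m hm
        ext x
        simp only [Set.mem_setOf_eq, Set.mem_empty_iff_false, iff_false, not_exists]
        rintro z ⟨hz, -⟩
        exact absurd (hz ⟨0, by omega⟩) (by simp [hEe])
      simp only [homDiam, hempty n (by omega), hempty (n+1) (by omega), Real.sSup_empty, le_refl]
  refine ⟨key, ?_⟩
  have hanti : Antitone (fun m : ℕ => homDiam v E (m + 2)) := by
    refine antitone_nat_of_succ_le fun m => ?_
    have := key (m + 2) (by omega)
    simpa [show m + 1 + 2 = m + 2 + 1 by omega] using this
  exact ⟨_, tendsto_atTop_ciInf hanti ⟨0, by rintro x ⟨m, rfl⟩; exact hnonneg _⟩⟩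
end
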